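/- arXiv:2102.02710 — 3 statements merged into one kernel-verified Lean document; each statement's English description precedes it below -/
import Mathlib

section
/- There exists a constant C > 0 and a map m* from pairs (x, b) of nonnegative capacity vectors (x : J → ℝ≥0, b : K → ℝ≥0) to matrices m*(x,b) : J × K → ℝ such that: (i) m*(x,b) ∈ 𝕄(x,b) for every (x,b); (ii) Σ_{j,k} v_{jk} m*(x,b)_{jk} = F(x,b), i.e., m*(x,b) is an optimal solution of the matching problem with capacities (x,b); and (iii) m* is Lipschitz continuous: for all nonnegative (x,b) and (x',b'), max_{j,k} |m*(x,b)_{jk} − m*(x',b')_{jk}| ≤ C · max(max_j |x_j − x'_j|, max_k |b_k − b'_k|). -/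
open Finset

section Auxiliary
lemma carath_cone {ι E : Type*} [Fintype ι] [DecidableEq ι] [AddCommGroup E] [Module ℝ E]
    (a : ι → E) :
    ∀ (s : Finset ι) (lam : ι → ℝ), (∀ i ∈ s, 0 ≤ lam i) →
    ∃ t ⊆ s, (LinearIndependent ℝ (fun i : t => a i)) ∧
      ∃ mu : ι → ℝ, (∀ i ∈ t, 0 ≤ mu i) ∧ ∑ i ∈ t, mu i • a i = ∑ i ∈ s, lam i • a i := by
  intro s
  induction s using Finset.strongInduction with
  | _ s ih =>
    intro lam hlam
    by_cases hli : LinearIndependent ℝ (fun i : s => a i)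
    · exact ⟨s, le_refl _, hli, lam, hlam, rfl⟩
    · obtain ⟨g, hg0, i₁, hgi₁⟩ := Fintype.not_linearIndependent_iff.mp hli
      -- extend g to ι
      set gam0 : ι → ℝ := fun i => if h : i ∈ s then g ⟨i, h⟩ else 0 with hgam0
      have hsum0 : ∀ g' : ↥s → ℝ, ∑ i : ↥s, g' i • a i =
          ∑ i ∈ s, (fun i => if h : i ∈ s then g' ⟨i, h⟩ else 0) i • a i := by
        intro g'
        rw [← Finset.sum_coe_sort s]
        exact Finset.sum_congr rfl (fun i _ => by simp [i.2])
      -- wlog: some positive coefficient in s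
      have key : ∀ gam : ι → ℝ, (∑ i ∈ s, gam i • a i = 0) → (∃ i ∈ s, 0 < gam i) →
          ∃ t ⊆ s, (LinearIndependent ℝ (fun i : t => a i)) ∧
          ∃ mu : ι → ℝ, (∀ i ∈ t, 0 ≤ mu i) ∧ ∑ i ∈ t, mu i • a i = ∑ i ∈ s, lam i • a i := by
        intro gam hgam ⟨iw, hiws, hiwpos⟩
        set P := s.filter (fun i => 0 < gam i) with hP
        have hPne : P.Nonempty := ⟨iw, Finset.mem_filter.mpr ⟨hiws, hiwpos⟩⟩
        obtain ⟨i₀, hi₀P, hi₀min⟩ := P.exists_min_image (fun i => lam i / gam i) hPne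
        have hi₀s : i₀ ∈ s := (Finset.mem_filter.mp hi₀P).1
        have hgi₀ : 0 < gam i₀ := (Finset.mem_filter.mp hi₀P).2
        set τ := lam i₀ / gam i₀ with hτ
        have hτ0 : 0 ≤ τ := div_nonneg (hlam i₀ hi₀s) hgi₀.le
        set lam' : ι → ℝ := fun i => lam i - τ * gam i with hlam'
        have hlam'nn : ∀ i ∈ s, 0 ≤ lam' i := by
          intro i his
          by_cases hpos : 0 < gam i
          · have h1 : τ ≤ lam i / gam i := hi₀min i (Finset.mem_filter.mpr ⟨his, hpos⟩)
            have h2 : τ * gam i ≤ lam i := (le_div_iff₀ hpos).mp h1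
            simp only [hlam']; linarith
          · push_neg at hpos
            have : 0 ≤ -(τ * gam i) := by nlinarith
            have := hlam i his
            simp only [hlam']; linarith
        have hlam'i₀ : lam' i₀ = 0 := by
          simp only [hlam', hτ]; field_simp; ring
        have hsum' : ∑ i ∈ s.erase i₀, lam' i • a i = ∑ i ∈ s, lam i • a i := by
          rw [Finset.sum_erase s (by rw [hlam'i₀]; exact zero_smul ℝ _)]
          have : ∑ i ∈ s, lam' i • a i = ∑ i ∈ s, lam i • a i - τ • ∑ i ∈ s, gam i • a i := by
            rw [Finset.smul_sum, ← Finset.sum_sub_distrib]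
            refine Finset.sum_congr rfl (fun i _ => ?_)
            simp only [hlam', sub_smul, smul_smul]
          rw [this, hgam, smul_zero, sub_zero]
        obtain ⟨t, hts, hli', mu, hmu, hmusum⟩ := ih (s.erase i₀) (Finset.erase_ssubset hi₀s) lam'
          (fun i hi => hlam'nn i (Finset.mem_of_mem_erase hi))
        exact ⟨t, le_trans hts (Finset.erase_subset _ _), hli', mu, hmu, by rw [hmusum, hsum']⟩
      by_cases hex : ∃ i ∈ s, 0 < gam0 i
      · exact key gam0 (by rw [← hsum0 g, hg0]) hex
      · apply key (-gam0)
        · rw [show ∑ i ∈ s, (-gam0) i • a i = -∑ i ∈ s, gam0 i • a i by simp [Finset.sum_neg_distrib],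
            ← hsum0 g, hg0, neg_zero]
        · push_neg at hex
          refine ⟨i₁, i₁.2, ?_⟩
          have h1 : gam0 i₁ = g i₁ := by simp [hgam0, i₁.2]
          have := hex i₁ i₁.2
          simp only [Pi.neg_apply]
          rcases lt_or_eq_of_le this with h | h
          · linarith
          · exfalso; apply hgi₁; rw [← h1, ← h]

section
variable {ι : Type*} [Fintype ι] [DecidableEq ι] {E : Type*} [NormedAddCommGroup E]
  [NormedSpace ℝ E] [FiniteDimensional ℝ E]

lemma coef_bound (a : ι → E) (t : Finset ι)
    (hli : LinearIndependent ℝ (fun i : t => a i)) :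
    ∃ C : ℝ, 0 ≤ C ∧ ∀ mu : ι → ℝ, (∀ i ∈ t, 0 ≤ mu i) →
      ∑ i ∈ t, mu i ≤ C * ‖∑ i ∈ t, mu i • a i‖ := by
  classical
  set T : (↥t → ℝ) →ₗ[ℝ] E := Fintype.linearCombination ℝ (fun i : t => a i) with hT
  have hTapp : ∀ f : ↥t → ℝ, T f = ∑ i : ↥t, f i • a i := by
    intro f; simp [hT, Fintype.linearCombination_apply]
  have hinj : Function.Injective T := by
    rw [← LinearMap.ker_eq_bot, LinearMap.ker_eq_bot']
    intro f hf
    have := Fintype.linearIndependent_iff.mp hli f (by rw [← hTapp]; exact hf)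
    funext i; exact this i
  let e := LinearEquiv.ofInjective T hinj
  let G : (LinearMap.range T) →L[ℝ] (↥t → ℝ) := LinearMap.toContinuousLinearMap (e.symm : (LinearMap.range T) →ₗ[ℝ] (↥t → ℝ))
  refine ⟨(t.card : ℝ) * ‖G‖, by positivity, ?_⟩
  intro mu hmu
  set f : ↥t → ℝ := fun i => mu i with hf
  have hTf : T f = ∑ i ∈ t, mu i • a i := by
    rw [hTapp, ← Finset.sum_coe_sort t (fun i => mu i • a i)]
  have hfval : f = G ⟨T f, LinearMap.mem_range_self T f⟩ := by
    simp only [G, LinearMap.coe_toContinuousLinearMap']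
    have : (⟨T f, LinearMap.mem_range_self T f⟩ : LinearMap.range T) = e f := rfl
    rw [this]; simp [e]
  have hnorm : ‖f‖ ≤ ‖G‖ * ‖∑ i ∈ t, mu i • a i‖ := by
    calc ‖f‖ = ‖G ⟨T f, LinearMap.mem_range_self T f⟩‖ := by rw [← hfval]
    _ ≤ ‖G‖ * ‖(⟨T f, LinearMap.mem_range_self T f⟩ : LinearMap.range T)‖ := G.le_opNorm _
    _ = ‖G‖ * ‖T f‖ := rfl
    _ = ‖G‖ * ‖∑ i ∈ t, mu i • a i‖ := by rw [hTf]
  calc ∑ i ∈ t, mu i = ∑ i : ↥t, f i := (Finset.sum_coe_sort t mu).symm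
  _ ≤ ∑ i : ↥t, ‖f‖ := Finset.sum_le_sum (fun i _ => by
      have h1 : |f i| ≤ ‖f‖ := by
        have := norm_le_pi_norm f i; simpa using this
      have := abs_le.mp h1; linarith [this.2])
  _ = (Fintype.card ↥t : ℝ) * ‖f‖ := by rw [Finset.sum_const, card_univ]; simp [nsmul_eq_mul]
  _ = (t.card : ℝ) * ‖f‖ := by rw [Fintype.card_coe]
  _ ≤ (t.card : ℝ) * (‖G‖ * ‖∑ i ∈ t, mu i • a i‖) := by
      apply mul_le_mul_of_nonneg_left hnorm (by positivity)
  _ = (t.card : ℝ) * ‖G‖ * ‖∑ i ∈ t, mu i • a i‖ := by ring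

lemma isClosed_coneFin (a : ι → E) (t : Finset ι)
    (hli : LinearIndependent ℝ (fun i : t => a i)) :
    IsClosed {w : E | ∃ mu : ι → ℝ, (∀ i ∈ t, 0 ≤ mu i) ∧ w = ∑ i ∈ t, mu i • a i} := by
  classical
  set T : (↥t → ℝ) →ₗ[ℝ] E := Fintype.linearCombination ℝ (fun i : t => a i) with hT
  have hTapp : ∀ f : ↥t → ℝ, T f = ∑ i : ↥t, f i • a i := by
    intro f; simp [hT, Fintype.linearCombination_apply]
  have hinj : LinearMap.ker T = ⊥ := by
    rw [LinearMap.ker_eq_bot']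
    intro f hf
    have := Fintype.linearIndependent_iff.mp hli f (by rw [← hTapp]; exact hf)
    funext i; exact this i
  have hemb := LinearMap.isClosedEmbedding_of_injective hinj
  have heq : {w : E | ∃ mu : ι → ℝ, (∀ i ∈ t, 0 ≤ mu i) ∧ w = ∑ i ∈ t, mu i • a i}
      = T '' {f : ↥t → ℝ | ∀ i, 0 ≤ f i} := by
    ext w
    constructor
    · rintro ⟨mu, hmu, rfl⟩
      exact ⟨fun i => mu i, fun i => hmu i i.2, by rw [hTapp, Finset.sum_coe_sort t (fun i => mu i • a i)]⟩
    · rintro ⟨f, hf, rfl⟩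
      refine ⟨fun i => if h : i ∈ t then f ⟨i, h⟩ else 0, fun i hi => by simp [hi]; exact hf _, ?_⟩
      rw [hTapp, ← Finset.sum_coe_sort t]
      exact Finset.sum_congr rfl (fun i _ => by simp [i.2])
  rw [heq]
  apply hemb.isClosedMap
  have : {f : ↥t → ℝ | ∀ i, 0 ≤ f i} = ⋂ i, {f : ↥t → ℝ | 0 ≤ f i} := by ext; simp [Set.mem_iInter]
  rw [this]
  exact isClosed_iInter (fun i => isClosed_le continuous_const (continuous_apply i))
end

section
variable {ι : Type*} [Fintype ι] [DecidableEq ι] {E : Type*} [NormedAddCommGroup E]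
  [InnerProductSpace ℝ E] [FiniteDimensional ℝ E]

local notation "⟪" x ", " y "⟫" => @inner ℝ _ _ x y

lemma farkas (a : ι → E) (I : Finset ι) (v : E)
    (hv : ∀ d : E, (∀ i ∈ I, ⟪a i, d⟫ ≤ 0) → ⟪v, d⟫ ≤ 0) :
    ∃ lam : ι → ℝ, (∀ i ∈ I, 0 ≤ lam i) ∧ v = ∑ i ∈ I, lam i • a i := by
  classical
  set C : Set E := {w | ∃ lam : ι → ℝ, (∀ i ∈ I, 0 ≤ lam i) ∧ w = ∑ i ∈ I, lam i • a i} with hC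
  have hmemC : ∀ w, w ∈ C ↔ ∃ lam : ι → ℝ, (∀ i ∈ I, 0 ≤ lam i) ∧ w = ∑ i ∈ I, lam i • a i :=
    fun w => Iff.rfl
  have h0C : (0 : E) ∈ C := ⟨0, fun i _ => le_refl 0, by simp⟩
  have haddC : ∀ w₁ ∈ C, ∀ w₂ ∈ C, w₁ + w₂ ∈ C := by
    rintro w₁ ⟨l₁, h₁, rfl⟩ w₂ ⟨l₂, h₂, rfl⟩
    exact ⟨l₁ + l₂, fun i hi => add_nonneg (h₁ i hi) (h₂ i hi), by
      rw [← Finset.sum_add_distrib]; exact Finset.sum_congr rfl (fun i _ => by simp [add_smul])⟩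
  have hsmulC : ∀ (c : ℝ), 0 ≤ c → ∀ w ∈ C, c • w ∈ C := by
    rintro c hc w ⟨l, hl, rfl⟩
    exact ⟨c • l, fun i hi => mul_nonneg hc (hl i hi), by
      rw [Finset.smul_sum]; exact Finset.sum_congr rfl (fun i _ => by simp [smul_smul])⟩
  have hconv : Convex ℝ C := by
    intro w₁ h₁ w₂ h₂ s t hs ht hst
    exact haddC _ (hsmulC s hs _ h₁) _ (hsmulC t ht _ h₂)
  have hclosed : IsClosed C := by
    have heq : C = ⋃ t ∈ {t : Finset ι | t ⊆ I ∧ LinearIndependent ℝ (fun i : t => a i)},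
        {w : E | ∃ mu : ι → ℝ, (∀ i ∈ t, 0 ≤ mu i) ∧ w = ∑ i ∈ t, mu i • a i} := by
      ext w
      simp only [Set.mem_iUnion, Set.mem_setOf_eq, exists_prop]
      constructor
      · rintro ⟨lam, hlam, rfl⟩
        obtain ⟨t, hts, hli, mu, hmu, hsum⟩ := carath_cone a I lam hlam
        exact ⟨t, ⟨hts, hli⟩, mu, hmu, hsum.symm⟩
      · rintro ⟨t, ⟨hts, hli⟩, mu, hmu, rfl⟩
        refine ⟨fun i => if i ∈ t then mu i else 0, fun i hi => by
          by_cases h : i ∈ t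
          · simp only [if_pos h]; exact hmu i h
          · simp only [if_neg h]; exact le_refl 0, ?_⟩
        rw [← Finset.sum_subset hts (fun i _ hit => by simp [if_neg hit])]
        exact (Finset.sum_congr rfl (fun i hi => by simp [if_pos hi])).symm
    rw [heq]
    exact Set.Finite.isClosed_biUnion (Set.toFinite _) (fun t ht => isClosed_coneFin a t ht.2)
  have hcomp : IsComplete C := hclosed.isComplete
  obtain ⟨p, hpC, hproj⟩ := exists_norm_eq_iInf_of_complete_convex ⟨0, h0C⟩ hcomp hconv v
  have hchar := (norm_eq_iInf_iff_real_inner_le_zero hconv hpC).mp hproj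
  set d := v - p with hd
  have hdp : ⟪d, p⟫ = 0 := by
    have h2 : ⟪d, (2:ℝ) • p - p⟫ ≤ 0 := hchar _ (hsmulC 2 (by norm_num) p hpC)
    have h0 : ⟪d, (0:E) - p⟫ ≤ 0 := hchar 0 h0C
    have e2 : (2:ℝ) • p - p = p := by module
    rw [e2] at h2
    rw [zero_sub, inner_neg_right] at h0
    linarith
  have hdC : ∀ c ∈ C, ⟪d, c⟫ ≤ 0 := by
    intro c hc
    have := hchar (c + p) (haddC c hc p hpC)
    rwa [add_sub_cancel_right] at this
  have hda : ∀ i ∈ I, ⟪a i, d⟫ ≤ 0 := by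
    intro i hi
    have haiC : a i ∈ C := by
      refine ⟨fun i' => if i' = i then 1 else 0, fun i' _ => by positivity, ?_⟩
      have : ∑ i' ∈ I, (if i' = i then (1:ℝ) else 0) • a i' = a i := by
        rw [Finset.sum_eq_single i (fun i' _ hne => by simp [if_neg hne])
          (fun h => absurd hi h)]
        simp
      rw [this]
    have := hdC (a i) haiC
    rwa [real_inner_comm] at this
  have hvd := hv d hda
  have hsplit : ⟪v, d⟫ = ⟪p, d⟫ + ‖d‖^2 := by
    have : v = p + d := by rw [hd]; abel
    rw [this, inner_add_left, real_inner_self_eq_norm_sq]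
  have hp0 : ⟪p, d⟫ = 0 := by rw [real_inner_comm]; exact hdp
  rw [hsplit, hp0, zero_add] at hvd
  have hd0 : d = 0 := norm_eq_zero.mp (by nlinarith [norm_nonneg d] : ‖d‖ = 0)
  have hvp : v = p := by
    have := sub_eq_zero.mp (hd ▸ hd0)
    exact this
  obtain ⟨lam, hlam, hsum⟩ := hpC
  exact ⟨lam, hlam, by rw [hvp, hsum]⟩
end

/-- polyhedron with matrix `A` and right-hand side `u` -/
def Pol {ι n : Type*} [Fintype n] (A : ι → n → ℝ) (u : ι → ℝ) : Set (n → ℝ) :=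
  {z | ∀ i, ∑ q, A i q * z q ≤ u i}

section
variable {ι n : Type*} [Fintype ι] [Fintype n]
local notation "⟪" x ", " y "⟫" => @inner ℝ _ _ x y

theorem hoffman (A : ι → n → ℝ) :
    ∃ κ : ℝ, 0 ≤ κ ∧ ∀ u : ι → ℝ, (Pol A u).Nonempty → ∀ z : n → ℝ, ∀ ε : ℝ, 0 ≤ ε →
      (∀ i, ∑ q, A i q * z q ≤ u i + ε) →
      ∃ w ∈ Pol A u, ∀ q, |z q - w q| ≤ κ * ε := by
  classical
  set E := EuclideanSpace ℝ n with hE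
  set a : ι → E := fun i => (WithLp.equiv 2 (n → ℝ)).symm (A i) with ha
  have hinner : ∀ (i : ι) (x : E), ⟪a i, x⟫ = ∑ q, A i q * x q := by
    intro i x
    rw [PiLp.inner_apply]
    exact Finset.sum_congr rfl (fun q _ => by simp [ha, RCLike.inner_apply, conj_trivial]; ring)
  -- the constant
  set g : Finset ι → ℝ := fun t =>
    if h : LinearIndependent ℝ (fun i : t => a i) then (coef_bound a t h).choose else 0 with hg
  have hg0 : ∀ t, 0 ≤ g t := by
    intro t; rw [hg]; dsimp only
    split
    · exact (coef_bound a t ‹_›).choose_spec.1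
    · exact le_refl 0
  set κ : ℝ := ∑ t : Finset ι, g t with hκ
  have hgκ : ∀ t : Finset ι, g t ≤ κ :=
    fun t => Finset.single_le_sum (fun t _ => hg0 t) (Finset.mem_univ t)
  have hκ0 : 0 ≤ κ := Finset.sum_nonneg (fun t _ => hg0 t)
  refine ⟨κ, hκ0, ?_⟩
  rintro u ⟨z₀, hz₀⟩ z ε hε hviol
  set K : Set E := {w | ∀ i, ⟪a i, w⟫ ≤ u i} with hK
  have hz₀K : ((WithLp.equiv 2 (n → ℝ)).symm z₀) ∈ K := by
    intro i; rw [hinner]; exact hz₀ i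
  have hconv : Convex ℝ K := by
    intro w₁ h₁ w₂ h₂ s t hs ht hst
    intro i
    rw [inner_add_right, real_inner_smul_right, real_inner_smul_right]
    calc s * ⟪a i, w₁⟫ + t * ⟪a i, w₂⟫ ≤ s * u i + t * u i := by
          apply add_le_add <;> apply mul_le_mul_of_nonneg_left <;> first | exact h₁ i | exact h₂ i | assumption
    _ = u i := by rw [← add_mul, hst, one_mul]
  have hclosed : IsClosed K := by
    have : K = ⋂ i, {w : E | ⟪a i, w⟫ ≤ u i} := by ext w; simp [hK, Set.mem_iInter]
    rw [this]
    exact isClosed_iInter (fun i => isClosed_le (Continuous.inner continuous_const continuous_id) continuous_const)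
  obtain ⟨w, hwK, hproj⟩ := exists_norm_eq_iInf_of_complete_convex ⟨_, hz₀K⟩
    hclosed.isComplete hconv ((WithLp.equiv 2 (n → ℝ)).symm z)
  set zE : E := (WithLp.equiv 2 (n → ℝ)).symm z with hzE
  have hchar := (norm_eq_iInf_iff_real_inner_le_zero hconv hwK).mp hproj
  set I : Finset ι := Finset.univ.filter (fun i => ⟪a i, w⟫ = u i) with hI
  -- normal cone property
  have hcone : ∀ d : E, (∀ i ∈ I, ⟪a i, d⟫ ≤ 0) → ⟪zE - w, d⟫ ≤ 0 := by
    intro d hd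
    rcases isEmpty_or_nonempty ι with hemp | hne
    · have : zE ∈ K := fun i => (IsEmpty.false i).elim
      have h2 := hchar zE this
      have : ⟪zE - w, zE - w⟫ ≤ 0 := h2
      have hz : zE - w = 0 := by
        have := real_inner_self_nonpos.mp this
        exact this
      rw [hz, inner_zero_left]
    · set tf : ι → ℝ := fun i => if ⟪a i, w⟫ < u i
        then (u i - ⟪a i, w⟫) / (max (⟪a i, d⟫) 0 + 1) else 1 with htf
      have htfpos : ∀ i, 0 < tf i := by
        intro i; rw [htf]; dsimp only
        split
        · apply div_pos (by linarith [‹⟪a i, w⟫ < u i›])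
          have : (0:ℝ) ≤ max (⟪a i, d⟫) 0 := le_max_right _ _
          linarith
        · norm_num
      set t : ℝ := Finset.univ.inf' Finset.univ_nonempty tf with ht
      have ht0 : 0 < t := by
        rw [ht, Finset.lt_inf'_iff]
        exact fun i _ => htfpos i
      have hmem : w + t • d ∈ K := by
        intro i
        rw [inner_add_right, real_inner_smul_right]
        by_cases hact : i ∈ I
        · have heq : ⟪a i, w⟫ = u i := (Finset.mem_filter.mp hact).2
          have hneg : ⟪a i, d⟫ ≤ 0 := hd i hact
          nlinarith
        · have hlt : ⟪a i, w⟫ < u i := by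
            rcases lt_or_eq_of_le (hwK i) with h | h
            · exact h
            · exact absurd (Finset.mem_filter.mpr ⟨Finset.mem_univ i, h⟩) hact
          have hti : t ≤ tf i := Finset.inf'_le _ (Finset.mem_univ i)
          rw [htf] at hti; simp only [if_pos hlt] at hti
          set m : ℝ := max (⟪a i, d⟫) 0 with hm
          have hm0 : 0 ≤ m := le_max_right _ _
          have hdm : ⟪a i, d⟫ ≤ m := le_max_left _ _
          have h1 : t * ⟪a i, d⟫ ≤ t * m := mul_le_mul_of_nonneg_left hdm ht0.le
          have h2 : t * m ≤ (u i - ⟪a i, w⟫) / (m + 1) * m := by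
            apply mul_le_mul_of_nonneg_right hti hm0
          have h3 : (u i - ⟪a i, w⟫) / (m + 1) * m ≤ (u i - ⟪a i, w⟫) := by
            rw [div_mul_eq_mul_div, div_le_iff₀ (by linarith)]
            nlinarith
          linarith
      have := hchar _ hmem
      rw [add_sub_cancel_left, real_inner_smul_right] at this
      nlinarith
  obtain ⟨lam, hlam, hsum⟩ := farkas a I (zE - w) (fun d hd => hcone d hd)
  obtain ⟨tt, htt, hli, mu, hmu, hmusum⟩ := carath_cone a I lam hlam
  have hbound := (coef_bound a tt hli).choose_spec.2 mu hmu
  have hgtt : (coef_bound a tt hli).choose = g tt := by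
    rw [hg]; dsimp only; rw [dif_pos hli]
  -- ‖zE - w‖ ≤ κ * ε
  have hub : ∀ i ∈ tt, ⟪a i, zE - w⟫ ≤ ε := by
    intro i hi
    have hiI : i ∈ I := htt hi
    have heq : ⟪a i, w⟫ = u i := (Finset.mem_filter.mp hiI).2
    rw [inner_sub_right, heq, hinner]
    have := hviol i
    simp only [hzE]
    have happ : ∀ q, ((WithLp.equiv 2 (n → ℝ)).symm z) q = z q := fun q => rfl
    calc ∑ q, A i q * ((WithLp.equiv 2 (n → ℝ)).symm z) q - u i
        = ∑ q, A i q * z q - u i := by rw [Finset.sum_congr rfl (fun q _ => by rw [happ])]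
      _ ≤ ε := by linarith
  have hkey : ‖zE - w‖^2 ≤ (g tt * ε) * ‖zE - w‖ := by
    have h1 : ⟪zE - w, zE - w⟫ = ∑ i ∈ tt, mu i * ⟪a i, zE - w⟫ := by
      nth_rewrite 1 [show zE - w = ∑ i ∈ tt, mu i • a i by rw [hmusum, ← hsum]]
      rw [sum_inner]
      exact Finset.sum_congr rfl (fun i _ => real_inner_smul_left _ _ _)
    have h2 : ∑ i ∈ tt, mu i * ⟪a i, zE - w⟫ ≤ ∑ i ∈ tt, mu i * ε :=
      Finset.sum_le_sum (fun i hi => mul_le_mul_of_nonneg_left (hub i hi) (hmu i hi))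
    have h3 : ∑ i ∈ tt, mu i * ε ≤ (g tt * ‖∑ i ∈ tt, mu i • a i‖) * ε := by
      rw [← Finset.sum_mul]
      apply mul_le_mul_of_nonneg_right _ hε
      rw [← hgtt]; exact hbound
    rw [← real_inner_self_eq_norm_sq]
    calc ⟪zE - w, zE - w⟫ ≤ (g tt * ‖∑ i ∈ tt, mu i • a i‖) * ε := by linarith
    _ = (g tt * ε) * ‖zE - w‖ := by rw [show (∑ i ∈ tt, mu i • a i) = zE - w by rw [hmusum, ← hsum]]; ring
  have hnormle : ‖zE - w‖ ≤ κ * ε := by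
    rcases eq_or_lt_of_le (norm_nonneg (zE - w)) with h0 | hpos
    · rw [← h0]; positivity
    · have : ‖zE - w‖ ≤ g tt * ε := by nlinarith
      have : g tt * ε ≤ κ * ε := mul_le_mul_of_nonneg_right (hgtt ▸ hgκ tt) hε
      linarith
  -- transfer back
  refine ⟨WithLp.equiv 2 (n → ℝ) w, ?_, ?_⟩
  · intro i
    have := hwK i
    rw [hinner] at this
    exact this
  · intro q
    have hcoord : |z q - (WithLp.equiv 2 (n → ℝ)) w q| ≤ ‖zE - w‖ := by
      have : z q - (WithLp.equiv 2 (n → ℝ)) w q = (zE - w) q := rfl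
      rw [this]
      rw [EuclideanSpace.norm_eq]
      have h1 : |(zE - w) q| = Real.sqrt (|(zE - w) q|^2) := by
        rw [Real.sqrt_sq_eq_abs, abs_abs]
      rw [h1]
      apply Real.sqrt_le_sqrt
      exact Finset.single_le_sum (f := fun q => |(zE - w) q|^2) (fun q _ => sq_nonneg _) (Finset.mem_univ q)
    linarith
end

universe v

lemma isClosed_Pol {ι n : Type*} [Fintype ι] [Fintype n] (A : ι → n → ℝ) (u : ι → ℝ) :
    IsClosed (Pol A u) := by
  have : Pol A u = ⋂ i, {z : n → ℝ | ∑ q, A i q * z q ≤ u i} := by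
    ext z; simp [Pol, Set.mem_iInter]
  rw [this]
  refine isClosed_iInter (fun i => isClosed_le ?_ continuous_const)
  exact continuous_finset_sum _ (fun q _ => (continuous_apply q).const_smul (A i q))

section
variable {Pm : Type*} {D : Set Pm} {d : Pm → Pm → ℝ}

lemma rec_selection {n : Type*} [Fintype n] [DecidableEq n]
    (hd0 : ∀ p p', 0 ≤ d p p') (hdsym : ∀ p p', d p p' = d p' p) :
    ∀ (L : List n) (ι : Type v) (_ : Fintype ι) (A : ι → n → ℝ) (y : Pm → ι → ℝ) (ℓ : ℝ),
      0 ≤ ℓ →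
      (∀ p ∈ D, ∀ p' ∈ D, ∀ i, |y p i - y p' i| ≤ ℓ * d p p') →
      (∀ p ∈ D, (Pol A (y p)).Nonempty) →
      (∀ p ∈ D, IsCompact (Pol A (y p))) →
      (∀ p ∈ D, ∀ z ∈ Pol A (y p), ∀ z' ∈ Pol A (y p), ∀ q, q ∉ L → z q = z' q) →
      ∃ C : ℝ, 0 ≤ C ∧ ∃ sel : Pm → n → ℝ,
        (∀ p ∈ D, sel p ∈ Pol A (y p)) ∧
        (∀ p ∈ D, ∀ p' ∈ D, ∀ q, |sel p q - sel p' q| ≤ C * d p p') := by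
  intro L
  induction L with
  | nil =>
    intro ι hft A y ℓ hℓ hyLip hne hcpt hdet
    obtain ⟨κ, hκ0, hκ⟩ := hoffman A
    set sel : Pm → n → ℝ := fun p => (fun q => sInf ((fun z => z q) '' Pol A (y p))) with hselDef
    refine ⟨κ * ℓ, by positivity, sel, ?_, ?_⟩
    · intro p hp
      obtain ⟨z₀, hz₀⟩ := hne p hp
      have huniq : ∀ z ∈ Pol A (y p), z = z₀ := by
        intro z hz; funext q
        exact hdet p hp z hz z₀ hz₀ q (List.not_mem_nil)
      have himg : ∀ q, (fun z => z q) '' Pol A (y p) = {z₀ q} := by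
        intro q; ext r
        constructor
        · rintro ⟨z, hz, rfl⟩; rw [huniq z hz]; rfl
        · rintro rfl; exact ⟨z₀, hz₀, rfl⟩
      have hseleq : sel p = z₀ := by
        funext q; rw [hselDef]; dsimp only; rw [himg q, csInf_singleton]
      rw [hseleq]; exact hz₀
    · intro p hp p' hp' q
      obtain ⟨z₀, hz₀⟩ := hne p hp
      obtain ⟨z₀', hz₀'⟩ := hne p' hp'
      have huniq : ∀ z ∈ Pol A (y p), z = z₀ := fun z hz => funext (fun q =>
        hdet p hp z hz z₀ hz₀ q (List.not_mem_nil))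
      have huniq' : ∀ z ∈ Pol A (y p'), z = z₀' := fun z hz => funext (fun q =>
        hdet p' hp' z hz z₀' hz₀' q (List.not_mem_nil))
      have hselp : ∀ qq, sInf ((fun z => z qq) '' Pol A (y p)) = z₀ qq := by
        intro qq
        have : (fun z => z qq) '' Pol A (y p) = {z₀ qq} := by
          ext r; constructor
          · rintro ⟨z, hz, rfl⟩; rw [huniq z hz]; rfl
          · rintro rfl; exact ⟨z₀, hz₀, rfl⟩
        rw [this, csInf_singleton]
      have hselp' : ∀ qq, sInf ((fun z => z qq) '' Pol A (y p')) = z₀' qq := by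
        intro qq
        have : (fun z => z qq) '' Pol A (y p') = {z₀' qq} := by
          ext r; constructor
          · rintro ⟨z, hz, rfl⟩; rw [huniq' z hz]; rfl
          · rintro rfl; exact ⟨z₀', hz₀', rfl⟩
        rw [this, csInf_singleton]
      have hgoal : sel p q = z₀ q ∧ sel p' q = z₀' q := ⟨hselp q, hselp' q⟩
      rw [hgoal.1, hgoal.2]
      -- Hoffman from p to p'
      have hviol : ∀ i, ∑ qq, A i qq * z₀ qq ≤ y p' i + ℓ * d p p' := by
        intro i
        have h1 := hz₀ i
        have h2 := hyLip p hp p' hp' i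
        have := abs_le.mp h2
        linarith [this.1, this.2]
      obtain ⟨w, hw, hwd⟩ := hκ (y p') ⟨z₀', hz₀'⟩ z₀ (ℓ * d p p')
        (mul_nonneg hℓ (hd0 p p')) hviol
      rw [huniq' w hw] at hwd
      calc |z₀ q - z₀' q| ≤ κ * (ℓ * d p p') := hwd q
      _ = κ * ℓ * d p p' := by ring
  | cons q₀ L' ih =>
    intro ι hft A y ℓ hℓ hyLip hne hcpt hdet
    obtain ⟨κ, hκ0, hκ⟩ := hoffman A
    classical
    -- the coordinate minimum value
    set c : Pm → ℝ := fun p => sInf ((fun z => z q₀) '' Pol A (y p)) with hc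
    have himg : ∀ p ∈ D, IsCompact ((fun z => z q₀) '' Pol A (y p)) ∧
        ((fun z => z q₀) '' Pol A (y p)).Nonempty :=
      fun p hp => ⟨(hcpt p hp).image (continuous_apply q₀), (hne p hp).image _⟩
    have hattain : ∀ p ∈ D, ∃ z ∈ Pol A (y p), z q₀ = c p := by
      intro p hp
      have := (himg p hp).1.sInf_mem (himg p hp).2
      obtain ⟨z, hz, hzq⟩ := this
      exact ⟨z, hz, hzq⟩
    have hlb : ∀ p ∈ D, ∀ z ∈ Pol A (y p), c p ≤ z q₀ := by
      intro p hp z hz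
      exact csInf_le (himg p hp).1.bddBelow ⟨z, hz, rfl⟩
    -- Lipschitz continuity of c
    have hcLip1 : ∀ p ∈ D, ∀ p' ∈ D, c p' - c p ≤ κ * ℓ * d p p' := by
      intro p hp p' hp'
      obtain ⟨z, hz, hzq⟩ := hattain p hp
      have hviol : ∀ i, ∑ qq, A i qq * z qq ≤ y p' i + ℓ * d p p' := by
        intro i
        have := abs_le.mp (hyLip p hp p' hp' i)
        have h1 := hz i
        linarith [this.1]
      obtain ⟨w, hw, hwd⟩ := hκ (y p') (hne p' hp') z (ℓ * d p p')
        (mul_nonneg hℓ (hd0 p p')) hviol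
      have h1 : c p' ≤ w q₀ := hlb p' hp' w hw
      have h2 := abs_le.mp (hwd q₀)
      have : w q₀ ≤ z q₀ + κ * (ℓ * d p p') := by linarith [h2.1]
      rw [hzq] at this
      calc c p' - c p ≤ w q₀ - c p := by linarith
      _ ≤ κ * (ℓ * d p p') := by linarith
      _ = κ * ℓ * d p p' := by ring
    have hcLip : ∀ p ∈ D, ∀ p' ∈ D, |c p - c p'| ≤ κ * ℓ * d p p' := by
      intro p hp p' hp'
      rw [abs_le]
      constructor
      · have := hcLip1 p hp p' hp'; linarith
      · have := hcLip1 p' hp' p hp; rw [hdsym p' p] at this; linarith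
    -- extended system
    set A' : (ι ⊕ Bool) → n → ℝ := Sum.elim A
      (fun s q => if s then (if q = q₀ then 1 else 0) else (if q = q₀ then -1 else 0)) with hA'
    set y' : Pm → (ι ⊕ Bool) → ℝ := fun p => Sum.elim (y p)
      (fun s => if s then c p else -(c p)) with hy'
    have hrow : ∀ (z : n → ℝ), (∑ q, (if q = q₀ then (1:ℝ) else 0) * z q) = z q₀ := by
      intro z
      rw [Finset.sum_congr rfl (fun q _ => show (if q = q₀ then (1:ℝ) else 0) * z q
        = if q = q₀ then z q else 0 by split <;> simp)]
      rw [Finset.sum_ite_eq' Finset.univ q₀ z, if_pos (Finset.mem_univ q₀)]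
    have hrowneg : ∀ (z : n → ℝ), (∑ q, (if q = q₀ then (-1:ℝ) else 0) * z q) = -(z q₀) := by
      intro z
      rw [Finset.sum_congr rfl (fun q _ => show (if q = q₀ then (-1:ℝ) else 0) * z q
        = -((if q = q₀ then (1:ℝ) else 0) * z q) by split <;> ring)]
      rw [Finset.sum_neg_distrib, hrow z]
    have hchar : ∀ p (z : n → ℝ), z ∈ Pol A' (y' p) ↔ (z ∈ Pol A (y p) ∧ z q₀ = c p) := by
      intro p z
      constructor
      · intro hz
        refine ⟨fun i => hz (Sum.inl i), ?_⟩
        have h1 := hz (Sum.inr true)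
        have h2 := hz (Sum.inr false)
        simp only [hA', hy', Sum.elim_inr, if_pos, if_true] at h1
        simp only [hA', hy', Sum.elim_inr, Bool.false_eq_true, if_false] at h2
        rw [hrow] at h1
        rw [hrowneg] at h2
        linarith
      · rintro ⟨hz, hq⟩
        intro i
        rcases i with i | s
        · exact hz i
        · rcases s with _ | _
          · simp only [hA', hy', Sum.elim_inr, Bool.false_eq_true, if_false]
            rw [hrowneg, hq]
          · simp only [hA', hy', Sum.elim_inr, if_true]
            rw [hrow, hq]
    have hℓ' : (0:ℝ) ≤ max ℓ (κ * ℓ) := le_max_of_le_left hℓ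
    have hyLip' : ∀ p ∈ D, ∀ p' ∈ D, ∀ i, |y' p i - y' p' i| ≤ max ℓ (κ * ℓ) * d p p' := by
      intro p hp p' hp' i
      rcases i with i | s
      · simp only [hy', Sum.elim_inl]
        calc |y p i - y p' i| ≤ ℓ * d p p' := hyLip p hp p' hp' i
        _ ≤ max ℓ (κ * ℓ) * d p p' := mul_le_mul_of_nonneg_right (le_max_left _ _) (hd0 p p')
      · have hcd : |c p - c p'| ≤ max ℓ (κ * ℓ) * d p p' := by
          calc |c p - c p'| ≤ κ * ℓ * d p p' := hcLip p hp p' hp'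
          _ ≤ max ℓ (κ * ℓ) * d p p' := mul_le_mul_of_nonneg_right (le_max_right _ _) (hd0 p p')
        rcases s with _ | _
        · simp only [hy', Sum.elim_inr, Bool.false_eq_true, if_false]
          rw [show -(c p) - -(c p') = -(c p - c p') by ring, abs_neg]
          exact hcd
        · simp only [hy', Sum.elim_inr, if_true]
          exact hcd
    have hne' : ∀ p ∈ D, (Pol A' (y' p)).Nonempty := by
      intro p hp
      obtain ⟨z, hz, hzq⟩ := hattain p hp
      exact ⟨z, (hchar p z).mpr ⟨hz, hzq⟩⟩
    have hcpt' : ∀ p ∈ D, IsCompact (Pol A' (y' p)) := by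
      intro p hp
      apply (hcpt p hp).of_isClosed_subset (isClosed_Pol A' (y' p))
      intro z hz
      exact ((hchar p z).mp hz).1
    have hdet' : ∀ p ∈ D, ∀ z ∈ Pol A' (y' p), ∀ z' ∈ Pol A' (y' p), ∀ q, q ∉ L' → z q = z' q := by
      intro p hp z hz z' hz' q hq
      by_cases hqq : q = q₀
      · subst hqq
        rw [((hchar p z).mp hz).2, ((hchar p z').mp hz').2]
      · have hnotin : q ∉ q₀ :: L' := by
          intro hmem
          rcases List.mem_cons.mp hmem with h | h
          · exact hqq h
          · exact hq h
        exact hdet p hp z ((hchar p z).mp hz).1 z' ((hchar p z').mp hz').1 q hnotin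
    obtain ⟨C, hC0, sel, hsel1, hsel2⟩ := ih (ι ⊕ Bool) inferInstance A' y'
      (max ℓ (κ * ℓ)) hℓ' hyLip' hne' hcpt' hdet'
    exact ⟨C, hC0, sel, fun p hp => ((hchar p (sel p)).mp (hsel1 p hp)).1, hsel2⟩
end

end Auxiliary

/-- The feasible set of matching rates `𝕄(x,b)` for capacity vectors `x` and `b`. -/
def Mset {J K : Type*} [Fintype J] [Fintype K] (x : J → ℝ) (b : K → ℝ) :
    Set (J × K → ℝ) :=
  {m | (∀ p, 0 ≤ m p) ∧ (∀ j, ∑ k : K, m (j, k) ≤ x j) ∧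
    (∀ k, ∑ j : J, m (j, k) ≤ b k)}

/-- The value `F(x,b)` of the matching problem with capacities `(x,b)`. -/
noncomputable def Fval {J K : Type*} [Fintype J] [Fintype K]
    (v : J × K → ℝ) (x : J → ℝ) (b : K → ℝ) : ℝ :=
  sSup ((fun m : J × K → ℝ => ∑ p : J × K, v p * m p) '' Mset x b)

/-- Lemma (Lipschitz selection): there is a constant `C > 0` and a Lipschitz continuous
selection `m*(x,b)` of optimal solutions to the matching problem with capacities `(x,b)`. -/
theorem exists_lipschitz_optimal_selection
    {J K : Type*} [Fintype J] [Fintype K] [Nonempty J] [Nonempty K]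
    (v : J × K → ℝ) (hv : ∀ p, 0 ≤ v p) :
    ∃ C : ℝ, 0 < C ∧
      ∃ mstar : (J → ℝ) → (K → ℝ) → (J × K → ℝ),
        (∀ x b, (∀ j, 0 ≤ x j) → (∀ k, 0 ≤ b k) →
          mstar x b ∈ Mset x b ∧ (∑ p : J × K, v p * mstar x b p) = Fval v x b) ∧
        (∀ x b x' b', (∀ j, 0 ≤ x j) → (∀ k, 0 ≤ b k) →
          (∀ j, 0 ≤ x' j) → (∀ k, 0 ≤ b' k) →
          ∀ p : J × K, |mstar x b p - mstar x' b' p| ≤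
            C * max (⨆ j, |x j - x' j|) (⨆ k, |b k - b' k|)) := by
  classical
  set Pm := (J → ℝ) × (K → ℝ) with hPm
  set D : Set Pm := {p | (∀ j, 0 ≤ p.1 j) ∧ (∀ k, 0 ≤ p.2 k)} with hD
  set dd : Pm → Pm → ℝ := fun p p' =>
    max (⨆ j, |p.1 j - p'.1 j|) (⨆ k, |p.2 k - p'.2 k|) with hdd
  have hbddJ : ∀ (f : J → ℝ), BddAbove (Set.range f) := fun f => (Set.finite_range f).bddAbove
  have hbddK : ∀ (f : K → ℝ), BddAbove (Set.range f) := fun f => (Set.finite_range f).bddAbove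
  have hdx : ∀ (p p' : Pm) (j : J), |p.1 j - p'.1 j| ≤ dd p p' := by
    intro p p' j
    exact le_trans (le_ciSup (f := fun j => |p.1 j - p'.1 j|) (hbddJ _) j) (le_max_left _ _)
  have hdb : ∀ (p p' : Pm) (k : K), |p.2 k - p'.2 k| ≤ dd p p' := by
    intro p p' k
    exact le_trans (le_ciSup (f := fun k => |p.2 k - p'.2 k|) (hbddK _) k) (le_max_right _ _)
  have hd0 : ∀ p p', 0 ≤ dd p p' := by
    intro p p'
    exact le_trans (abs_nonneg _) (hdx p p' (Classical.arbitrary J))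
  have hdsym : ∀ p p', dd p p' = dd p' p := by
    intro p p'
    rw [hdd]; dsimp only
    congr 1
    · exact iSup_congr (fun j => abs_sub_comm _ _)
    · exact iSup_congr (fun k => abs_sub_comm _ _)
  -- base system
  set ι₀ := ((J × K) ⊕ (J ⊕ K)) with hι₀
  set A₀ : ι₀ → (J × K) → ℝ := Sum.elim
      (fun p' p => if p = p' then -1 else 0)
      (Sum.elim (fun j p => if p.1 = j then 1 else 0) (fun k p => if p.2 = k then 1 else 0))
    with hA₀
  set y₀ : Pm → ι₀ → ℝ := fun p => Sum.elim (fun _ => 0) (Sum.elim p.1 p.2) with hy₀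
  have hrowneg : ∀ (m : J × K → ℝ) (p' : J × K),
      ∑ p, (if p = p' then (-1:ℝ) else 0) * m p = -(m p') := by
    intro m p'
    rw [Finset.sum_congr rfl (fun p _ => show (if p = p' then (-1:ℝ) else 0) * m p
      = -(if p = p' then m p else 0) by split <;> ring), Finset.sum_neg_distrib,
      Finset.sum_ite_eq' Finset.univ p' m, if_pos (Finset.mem_univ p')]
  have hrowJ : ∀ (m : J × K → ℝ) (j : J),
      ∑ p : J × K, (if p.1 = j then (1:ℝ) else 0) * m p = ∑ k, m (j, k) := by
    intro m j
    rw [Fintype.sum_prod_type]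
    rw [Finset.sum_congr rfl (fun j' _ => show ∑ k, (if j' = j then (1:ℝ) else 0) * m (j', k)
      = if j' = j then ∑ k, m (j', k) else 0 by split <;> simp)]
    rw [Finset.sum_ite_eq' Finset.univ j (fun j' => ∑ k, m (j', k)), if_pos (Finset.mem_univ j)]
  have hrowK : ∀ (m : J × K → ℝ) (k : K),
      ∑ p : J × K, (if p.2 = k then (1:ℝ) else 0) * m p = ∑ j, m (j, k) := by
    intro m k
    rw [Fintype.sum_prod_type_right]
    rw [Finset.sum_congr rfl (fun k' _ => show ∑ j, (if k' = k then (1:ℝ) else 0) * m (j, k')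
      = if k' = k then ∑ j, m (j, k') else 0 by split <;> simp)]
    rw [Finset.sum_ite_eq' Finset.univ k (fun k' => ∑ j, m (j, k')), if_pos (Finset.mem_univ k)]
  have hPol₀ : ∀ p : Pm, Pol A₀ (y₀ p) = Mset p.1 p.2 := by
    intro p
    ext m
    constructor
    · intro hm
      refine ⟨fun p' => ?_, fun j => ?_, fun k => ?_⟩
      · have := hm (Sum.inl p')
        rw [hA₀] at this; simp only [Sum.elim_inl] at this
        rw [hrowneg m p'] at this
        simp only [hy₀, Sum.elim_inl] at this
        linarith
      · have := hm (Sum.inr (Sum.inl j))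
        rw [hA₀] at this; simp only [Sum.elim_inr, Sum.elim_inl] at this
        rw [hrowJ m j] at this
        simpa [hy₀] using this
      · have := hm (Sum.inr (Sum.inr k))
        rw [hA₀] at this; simp only [Sum.elim_inr] at this
        rw [hrowK m k] at this
        simpa [hy₀] using this
    · rintro ⟨h1, h2, h3⟩
      rintro (p' | j | k)
      · simp only [hA₀, Sum.elim_inl, hy₀]
        rw [hrowneg m p']
        linarith [h1 p']
      · simp only [hA₀, Sum.elim_inr, Sum.elim_inl, hy₀]
        rw [hrowJ m j]
        exact h2 j
      · simp only [hA₀, Sum.elim_inr, hy₀]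
        rw [hrowK m k]
        exact h3 k
  -- compactness and nonemptiness of Mset
  have hMne : ∀ p ∈ D, (Mset p.1 p.2).Nonempty := by
    rintro p ⟨hx, hb⟩
    exact ⟨0, fun _ => le_refl 0, fun j => by simpa using hx j, fun k => by simpa using hb k⟩
  have hMbd : ∀ (p : Pm), ∀ m ∈ Mset p.1 p.2, ∀ q : J × K, 0 ≤ m q ∧ m q ≤ p.1 q.1 := by
    rintro p m ⟨h1, h2, h3⟩ q
    refine ⟨h1 q, ?_⟩
    calc m q = m (q.1, q.2) := by rw [Prod.mk.eta]
    _ ≤ ∑ k, m (q.1, k) := Finset.single_le_sum (f := fun k => m (q.1, k))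
        (fun k _ => h1 (q.1, k)) (Finset.mem_univ q.2)
    _ ≤ p.1 q.1 := h2 q.1
  have hMcpt : ∀ (p : Pm), IsCompact (Mset p.1 p.2) := by
    intro p
    have hsub : Mset p.1 p.2 ⊆ Set.Icc (fun _ => 0) (fun q => p.1 q.1) := by
      intro m hm
      constructor
      · intro q; exact (hMbd p m hm q).1
      · intro q; exact (hMbd p m hm q).2
    have hcl : IsClosed (Mset p.1 p.2) := by
      rw [← hPol₀ p]; exact isClosed_Pol _ _
    exact (isCompact_Icc).of_isClosed_subset hcl hsub
  -- the objective and Fval attained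
  set obj : (J × K → ℝ) → ℝ := fun m => ∑ q, v q * m q with hobj
  have hobjcont : Continuous obj :=
    continuous_finset_sum _ (fun q _ => (continuous_apply q).const_smul (v q))
  have hFvalmem : ∀ p ∈ D, ∃ mo ∈ Mset p.1 p.2, obj mo = Fval v p.1 p.2 := by
    intro p hp
    have himg : IsCompact (obj '' Mset p.1 p.2) := (hMcpt p).image hobjcont
    have hne : (obj '' Mset p.1 p.2).Nonempty := (hMne p hp).image _
    have := himg.sSup_mem hne
    obtain ⟨mo, hmo, hmoeq⟩ := this
    exact ⟨mo, hmo, hmoeq⟩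
  have hFvalub : ∀ (p : Pm), ∀ m ∈ Mset p.1 p.2, obj m ≤ Fval v p.1 p.2 := by
    intro p m hm
    have himg : IsCompact (obj '' Mset p.1 p.2) := (hMcpt p).image hobjcont
    exact le_csSup himg.bddAbove ⟨m, hm, rfl⟩
  -- Hoffman for the base system
  obtain ⟨κ₀, hκ₀0, hκ₀⟩ := hoffman A₀
  set V : ℝ := ∑ q : J × K, v q with hV
  have hV0 : 0 ≤ V := Finset.sum_nonneg (fun q _ => hv q)
  have hNcard : (0:ℝ) ≤ V * κ₀ := mul_nonneg hV0 hκ₀0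
  -- transfer a feasible point from p to p'
  have htransfer : ∀ p ∈ D, ∀ p' ∈ D, ∀ m ∈ Mset p.1 p.2,
      ∃ w ∈ Mset p'.1 p'.2, ∀ q, |m q - w q| ≤ κ₀ * dd p p' := by
    intro p hp p' hp' m hm
    have hmPol : m ∈ Pol A₀ (y₀ p) := by rw [hPol₀ p]; exact hm
    have hviol : ∀ i, ∑ q, A₀ i q * m q ≤ y₀ p' i + dd p p' := by
      rintro (q' | j | k)
      · have := hmPol (Sum.inl q')
        simp only [hy₀, Sum.elim_inl] at this ⊢
        linarith [hd0 p p']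
      · have := hmPol (Sum.inr (Sum.inl j))
        simp only [hy₀, Sum.elim_inr, Sum.elim_inl] at this ⊢
        have h2 := abs_le.mp (hdx p p' j)
        linarith [h2.1]
      · have := hmPol (Sum.inr (Sum.inr k))
        simp only [hy₀, Sum.elim_inr] at this ⊢
        have h2 := abs_le.mp (hdb p p' k)
        linarith [h2.1]
    obtain ⟨w, hw, hwd⟩ := hκ₀ (y₀ p') (by rw [hPol₀ p']; exact hMne p' hp') m
      (dd p p') (hd0 p p') hviol
    rw [hPol₀ p'] at hw
    exact ⟨w, hw, fun q => by
      have := hwd q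
      calc |m q - w q| ≤ κ₀ * dd p p' := this⟩
  -- Lipschitz continuity of Fval
  have hFLip : ∀ p ∈ D, ∀ p' ∈ D,
      |Fval v p.1 p.2 - Fval v p'.1 p'.2| ≤ (V * κ₀) * dd p p' := by
    have key : ∀ p ∈ D, ∀ p' ∈ D,
        Fval v p.1 p.2 - Fval v p'.1 p'.2 ≤ (V * κ₀) * dd p p' := by
      intro p hp p' hp'
      obtain ⟨mo, hmo, hmoeq⟩ := hFvalmem p hp
      obtain ⟨w, hw, hwd⟩ := htransfer p hp p' hp' mo hmo
      have h1 : obj w ≤ Fval v p'.1 p'.2 := hFvalub p' w hw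
      have h2 : obj mo - obj w ≤ (V * κ₀) * dd p p' := by
        rw [hobj]; dsimp only
        rw [← Finset.sum_sub_distrib]
        calc ∑ q, (v q * mo q - v q * w q) = ∑ q, v q * (mo q - w q) := by
              exact Finset.sum_congr rfl (fun q _ => by ring)
        _ ≤ ∑ q, v q * (κ₀ * dd p p') := Finset.sum_le_sum (fun q _ => by
              have h3 := abs_le.mp (hwd q)
              exact mul_le_mul_of_nonneg_left (by linarith [h3.2]) (hv q))
        _ = V * (κ₀ * dd p p') := by rw [← Finset.sum_mul]
        _ = (V * κ₀) * dd p p' := by ring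
      linarith [hmoeq ▸ h2]
    intro p hp p' hp'
    rw [abs_le]
    constructor
    · have := key p' hp' p hp; rw [hdsym p' p] at this; linarith
    · exact key p hp p' hp'
  -- extended system with optimality constraint
  set ι₁ := (ι₀ ⊕ Unit) with hι₁
  set A₁ : ι₁ → (J × K) → ℝ := Sum.elim A₀ (fun _ q => -(v q)) with hA₁
  set y₁ : Pm → ι₁ → ℝ := fun p => Sum.elim (y₀ p) (fun _ => -(Fval v p.1 p.2)) with hy₁
  have hoptrow : ∀ (m : J × K → ℝ), ∑ q, (-(v q)) * m q = -(obj m) := by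
    intro m
    rw [hobj]; dsimp only
    rw [← Finset.sum_neg_distrib]
    exact Finset.sum_congr rfl (fun q _ => by ring)
  have hPol₁ : ∀ p : Pm, Pol A₁ (y₁ p) =
      {m | m ∈ Mset p.1 p.2 ∧ Fval v p.1 p.2 ≤ obj m} := by
    intro p
    ext m
    constructor
    · intro hm
      have h1 : m ∈ Pol A₀ (y₀ p) := fun i => hm (Sum.inl i)
      have h2 := hm (Sum.inr ())
      simp only [hA₁, hy₁, Sum.elim_inr] at h2
      rw [hoptrow m] at h2
      exact ⟨by rw [← hPol₀ p]; exact h1, by linarith⟩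
    · rintro ⟨h1, h2⟩
      rintro (i | u)
      · have : m ∈ Pol A₀ (y₀ p) := by rw [hPol₀ p]; exact h1
        exact this i
      · simp only [hA₁, hy₁, Sum.elim_inr]
        rw [hoptrow m]
        linarith
  set ℓ₁ : ℝ := max 1 (V * κ₀) with hℓ₁
  have hℓ₁0 : 0 ≤ ℓ₁ := le_trans zero_le_one (le_max_left _ _)
  have hy₁Lip : ∀ p ∈ D, ∀ p' ∈ D, ∀ i, |y₁ p i - y₁ p' i| ≤ ℓ₁ * dd p p' := by
    intro p hp p' hp' i
    have hdle : dd p p' ≤ ℓ₁ * dd p p' := by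
      nth_rewrite 1 [← one_mul (dd p p')]
      exact mul_le_mul_of_nonneg_right (le_max_left _ _) (hd0 p p')
    rcases i with (q' | j | k) | u
    · simp only [hy₁, hy₀, Sum.elim_inl]
      rw [sub_zero, abs_zero]
      exact le_trans (hd0 p p') hdle
    · simp only [hy₁, hy₀, Sum.elim_inl, Sum.elim_inr]
      exact le_trans (hdx p p' j) hdle
    · simp only [hy₁, hy₀, Sum.elim_inl, Sum.elim_inr]
      exact le_trans (hdb p p' k) hdle
    · simp only [hy₁, Sum.elim_inr]
      rw [show -(Fval v p.1 p.2) - -(Fval v p'.1 p'.2)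
        = -(Fval v p.1 p.2 - Fval v p'.1 p'.2) by ring, abs_neg]
      calc |Fval v p.1 p.2 - Fval v p'.1 p'.2| ≤ (V * κ₀) * dd p p' := hFLip p hp p' hp'
      _ ≤ ℓ₁ * dd p p' := mul_le_mul_of_nonneg_right (le_max_right _ _) (hd0 p p')
  have hne₁ : ∀ p ∈ D, (Pol A₁ (y₁ p)).Nonempty := by
    intro p hp
    obtain ⟨mo, hmo, hmoeq⟩ := hFvalmem p hp
    exact ⟨mo, by rw [hPol₁ p]; exact ⟨hmo, le_of_eq hmoeq.symm⟩⟩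
  have hcpt₁ : ∀ p ∈ D, IsCompact (Pol A₁ (y₁ p)) := by
    intro p hp
    apply (hMcpt p).of_isClosed_subset (isClosed_Pol A₁ (y₁ p))
    intro m hm
    rw [hPol₁ p] at hm
    exact hm.1
  set L : List (J × K) := (Finset.univ : Finset (J × K)).toList with hL
  have hdet₁ : ∀ p ∈ D, ∀ z ∈ Pol A₁ (y₁ p), ∀ z' ∈ Pol A₁ (y₁ p), ∀ q, q ∉ L → z q = z' q := by
    intro p hp z hz z' hz' q hq
    exact absurd (Finset.mem_toList.mpr (Finset.mem_univ q)) hq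
  obtain ⟨C, hC0, sel, hsel1, hsel2⟩ := rec_selection (D := D) (d := dd) hd0 hdsym L
    ι₁ inferInstance A₁ y₁ ℓ₁ hℓ₁0 hy₁Lip hne₁ hcpt₁ hdet₁
  refine ⟨max C 1, lt_of_lt_of_le zero_lt_one (le_max_right _ _),
    fun x b => sel (x, b), ?_, ?_⟩
  · intro x b hx hb
    have hpD : ((x, b) : Pm) ∈ D := ⟨hx, hb⟩
    have hmem := hsel1 (x, b) hpD
    rw [hPol₁ (x, b)] at hmem
    refine ⟨hmem.1, le_antisymm ?_ ?_⟩
    · exact hFvalub (x, b) _ hmem.1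
    · exact hmem.2
  · intro x b x' b' hx hb hx' hb' q
    have h1 := hsel2 (x, b) ⟨hx, hb⟩ (x', b') ⟨hx', hb'⟩ q
    calc |sel (x, b) q - sel (x', b') q| ≤ C * dd (x, b) (x', b') := h1
    _ ≤ max C 1 * dd (x, b) (x', b') :=
        mul_le_mul_of_nonneg_right (le_max_left _ _) (hd0 _ _)
    _ = max C 1 * max (⨆ j, |x j - x' j|) (⨆ k, |b k - b' k|) := rfl
end

section
/- The value function F of the matching problem is nondecreasing in each argument: if x ≤ x' and b ≤ b' componentwise (all vectors nonnegative), then F(x,b) ≤ F(x',b'). Moreover, if there exists a C-Lipschitz optimal-solution selection m* (with respect to the sup norms, as in the Lipschitz selection lemma), then for every α ≥ 0, every j ∈ J and every k ∈ K: 0 ≤ F(x + α·e_j, b) − F(x,b) ≤ v̄·|J|·|K|·C·α and 0 ≤ F(x, b + α·e_k) − F(x,b) ≤ v̄·|J|·|K|·C·α, where e_j and e_k are coordinate unit vectors and v̄ = max_{j,k} v_{jk}. -/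
section Aux
variable {J K : Type*} [Fintype J] [Fintype K]

lemma mem_Mset_le {x : J → ℝ} {b : K → ℝ} {m : J × K → ℝ}
    (hm : m ∈ Mset x b) (p : J × K) : m p ≤ x p.1 := by
  obtain ⟨h0, hx, _⟩ := hm
  calc m p = m (p.1, p.2) := by rfl
    _ ≤ ∑ k : K, m (p.1, k) :=
      Finset.single_le_sum (fun k _ => h0 _) (Finset.mem_univ p.2)
    _ ≤ x p.1 := hx _

lemma Fval_bddAbove (v : J × K → ℝ) (hv : ∀ p, 0 ≤ v p) (x : J → ℝ) (b : K → ℝ) :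
    BddAbove ((fun m : J × K → ℝ => ∑ p : J × K, v p * m p) '' Mset x b) := by
  refine ⟨∑ p : J × K, v p * x p.1, ?_⟩
  rintro _ ⟨m, hm, rfl⟩
  exact Finset.sum_le_sum fun p _ => mul_le_mul_of_nonneg_left (mem_Mset_le hm p) (hv p)

lemma zero_mem_Mset {x : J → ℝ} {b : K → ℝ} (hx : ∀ j, 0 ≤ x j) (hb : ∀ k, 0 ≤ b k) :
    (fun _ => (0:ℝ)) ∈ Mset x b :=
  ⟨fun _ => le_refl _, fun j => by simpa using hx j, fun k => by simpa using hb k⟩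

lemma Fval_mono (v : J × K → ℝ) (hv : ∀ p, 0 ≤ v p) {x x' : J → ℝ} {b b' : K → ℝ}
    (hx : ∀ j, 0 ≤ x j) (hb : ∀ k, 0 ≤ b k)
    (hxx : ∀ j, x j ≤ x' j) (hbb : ∀ k, b k ≤ b' k) :
    Fval v x b ≤ Fval v x' b' := by
  refine csSup_le_csSup (Fval_bddAbove v hv x' b') ⟨_, ⟨_, zero_mem_Mset hx hb, rfl⟩⟩
    (Set.image_mono ?_)
  rintro m ⟨h0, hxm, hbm⟩
  exact ⟨h0, fun j => (hxm j).trans (hxx j), fun k => (hbm k).trans (hbb k)⟩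

end Aux

section Aux2
variable {J K : Type*} [Fintype J] [Fintype K] [Nonempty J] [Nonempty K]

lemma Fval_incr_le (v : J × K → ℝ) (hv : ∀ p, 0 ≤ v p)
    (C : ℝ) (mstar : (J → ℝ) → (K → ℝ) → (J × K → ℝ))
    (hopt : ∀ x b, (∀ j, 0 ≤ x j) → (∀ k, 0 ≤ b k) →
      mstar x b ∈ Mset x b ∧ (∑ p : J × K, v p * mstar x b p) = Fval v x b)
    (hlip : ∀ x b x' b', (∀ j, 0 ≤ x j) → (∀ k, 0 ≤ b k) →
      (∀ j, 0 ≤ x' j) → (∀ k, 0 ≤ b' k) →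
      ∀ p : J × K, |mstar x b p - mstar x' b' p| ≤
        C * max (⨆ j, |x j - x' j|) (⨆ k, |b k - b' k|))
    {x x' : J → ℝ} {b b' : K → ℝ}
    (hx : ∀ j, 0 ≤ x j) (hb : ∀ k, 0 ≤ b k)
    (hx' : ∀ j, 0 ≤ x' j) (hb' : ∀ k, 0 ≤ b' k) {α : ℝ}
    (hM : max (⨆ j, |x' j - x j|) (⨆ k, |b' k - b k|) = α) :
    Fval v x' b' - Fval v x b ≤
      (⨆ p : J × K, v p) * (Fintype.card J) * (Fintype.card K) * C * α := by
  obtain ⟨hm'mem, hm'⟩ := hopt x' b' hx' hb'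
  obtain ⟨hmmem, hm⟩ := hopt x b hx hb
  have hlip' : ∀ p : J × K, |mstar x' b' p - mstar x b p| ≤ C * α := fun p => by
    have := hlip x' b' x b hx' hb' hx hb p; rwa [hM] at this
  have hCα : 0 ≤ C * α := (abs_nonneg _).trans (hlip' (Classical.arbitrary _))
  have hvs : ∀ p : J × K, v p ≤ ⨆ p : J × K, v p := fun p =>
    le_ciSup (Set.Finite.bddAbove (Set.finite_range v)) p
  rw [← hm', ← hm, ← Finset.sum_sub_distrib]
  calc ∑ p : J × K, (v p * mstar x' b' p - v p * mstar x b p)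
      ≤ ∑ _p : J × K, (⨆ p : J × K, v p) * (C * α) := by
        refine Finset.sum_le_sum fun p _ => ?_
        rw [← mul_sub]
        calc v p * (mstar x' b' p - mstar x b p)
            ≤ v p * (C * α) :=
              mul_le_mul_of_nonneg_left ((le_abs_self _).trans (hlip' p)) (hv p)
          _ ≤ (⨆ p : J × K, v p) * (C * α) :=
              mul_le_mul_of_nonneg_right (hvs p) hCα
    _ = (⨆ p : J × K, v p) * (Fintype.card J) * (Fintype.card K) * C * α := by
        rw [Finset.sum_const, Finset.card_univ, Fintype.card_prod, nsmul_eq_mul]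
        push_cast; ring

lemma ciSup_shift {ι : Type*} [Fintype ι] [Nonempty ι] [DecidableEq ι]
    (x : ι → ℝ) (j : ι) {α : ℝ} (hα : 0 ≤ α) :
    (⨆ j', |(x j' + if j' = j then α else 0) - x j'|) = α := by
  have h : ∀ j', |(x j' + if j' = j then α else 0) - x j'| = if j' = j then α else 0 := by
    intro j'; split_ifs <;> simp [abs_of_nonneg hα]
  refine le_antisymm (ciSup_le fun j' => by rw [h]; split_ifs <;> simp [hα]) ?_
  have := le_ciSup (f := fun j' => |(x j' + if j' = j then α else 0) - x j'|)
    (Set.Finite.bddAbove (Set.finite_range _)) j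
  rwa [h, if_pos rfl] at this

end Aux2

/-- Lemma (monotonicity and bounded increments of the value function): `F` is
nondecreasing in each argument, and, given a `C`-Lipschitz optimal-solution selection,
increasing one capacity coordinate by `α ≥ 0` increases `F` by at most
`v̄ |J| |K| C α`, where `v̄ = max v`. -/
theorem value_function_monotone_and_bounded_increments
    {J K : Type*} [Fintype J] [Fintype K] [Nonempty J] [Nonempty K] [DecidableEq J] [DecidableEq K]
    (v : J × K → ℝ) (hv : ∀ p, 0 ≤ v p) :
    (∀ (x x' : J → ℝ) (b b' : K → ℝ),
      (∀ j, 0 ≤ x j) → (∀ k, 0 ≤ b k) → (∀ j, x j ≤ x' j) → (∀ k, b k ≤ b' k) →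
      Fval v x b ≤ Fval v x' b') ∧
    (∀ (C : ℝ) (mstar : (J → ℝ) → (K → ℝ) → (J × K → ℝ)),
      (∀ x b, (∀ j, 0 ≤ x j) → (∀ k, 0 ≤ b k) →
        mstar x b ∈ Mset x b ∧ (∑ p : J × K, v p * mstar x b p) = Fval v x b) →
      (∀ x b x' b', (∀ j, 0 ≤ x j) → (∀ k, 0 ≤ b k) →
        (∀ j, 0 ≤ x' j) → (∀ k, 0 ≤ b' k) →
        ∀ p : J × K, |mstar x b p - mstar x' b' p| ≤
          C * max (⨆ j, |x j - x' j|) (⨆ k, |b k - b' k|)) →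
      ∀ (x : J → ℝ) (b : K → ℝ) (α : ℝ),
        (∀ j, 0 ≤ x j) → (∀ k, 0 ≤ b k) → 0 ≤ α →
        (∀ j : J,
          0 ≤ Fval v (fun j' => x j' + if j' = j then α else 0) b - Fval v x b ∧
          Fval v (fun j' => x j' + if j' = j then α else 0) b - Fval v x b ≤
            (⨆ p : J × K, v p) * (Fintype.card J) * (Fintype.card K) * C * α) ∧
        (∀ k : K,
          0 ≤ Fval v x (fun k' => b k' + if k' = k then α else 0) - Fval v x b ∧
          Fval v x (fun k' => b k' + if k' = k then α else 0) - Fval v x b ≤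
            (⨆ p : J × K, v p) * (Fintype.card J) * (Fintype.card K) * C * α)) := by
  constructor
  · exact fun x x' b b' hx hb hxx hbb => Fval_mono v hv hx hb hxx hbb
  · intro C mstar hopt hlip x b α hx hb hα
    constructor
    · intro j
      have hite : ∀ j' : J, (0:ℝ) ≤ if j' = j then α else 0 := fun j' => by
        split_ifs <;> simp [hα]
      have hx'0 : ∀ j', 0 ≤ x j' + if j' = j then α else 0 := fun j' =>
        add_nonneg (hx j') (hite j')
      have hle : ∀ j', x j' ≤ x j' + if j' = j then α else 0 := fun j' =>
        le_add_of_nonneg_right (hite j')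
      refine ⟨sub_nonneg.mpr (Fval_mono v hv hx hb hle fun k => le_refl _), ?_⟩
      refine Fval_incr_le v hv C mstar hopt hlip hx hb hx'0 hb ?_
      rw [ciSup_shift x j hα]
      have h0 : (⨆ k : K, |b k - b k|) = 0 := by simp
      rw [h0, max_eq_left hα]
    · intro k
      have hite : ∀ k' : K, (0:ℝ) ≤ if k' = k then α else 0 := fun k' => by
        split_ifs <;> simp [hα]
      have hb'0 : ∀ k', 0 ≤ b k' + if k' = k then α else 0 := fun k' =>
        add_nonneg (hb k') (hite k')
      have hle : ∀ k', b k' ≤ b k' + if k' = k then α else 0 := fun k' =>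
        le_add_of_nonneg_right (hite k')
      refine ⟨sub_nonneg.mpr (Fval_mono v hv hx hb (fun j => le_refl _) hle), ?_⟩
      refine Fval_incr_le v hv C mstar hopt hlip hx hb hx hb'0 ?_
      rw [ciSup_shift b k hα]
      have h0 : (⨆ j : J, |x j - x j|) = 0 := by simp
      rw [h0, max_eq_right hα]
end

section
/- Suppose a C-Lipschitz optimal-solution selection for the matching problem exists, and set C₁ = (|J| + |K|)·|J|·|K|·C·v̄. Then for every ε > 0 and all nonnegative capacity vectors x : J → ℝ≥0, b : K → ℝ≥0, A : J → ℝ≥0, B : K → ℝ≥0 satisfying A_j ≥ x_j − ε for all j and B_k ≥ b_k − ε for all k, one has F(A,B) ≥ F(x,b) − C₁·ε. -/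
/-- Lemma: given a `C`-Lipschitz optimal-solution selection, with
`C₁ = (|J| + |K|) |J| |K| C v̄`, for every `ε > 0` and all nonnegative capacities with
`A ≥ x − ε` and `B ≥ b − ε` componentwise, one has `F(A,B) ≥ F(x,b) − C₁ ε`. -/
theorem value_function_stability
    {J K : Type*} [Fintype J] [Fintype K] [Nonempty J] [Nonempty K]
    (v : J × K → ℝ) (hv : ∀ p, 0 ≤ v p)
    (C : ℝ) (mstar : (J → ℝ) → (K → ℝ) → (J × K → ℝ))
    (hopt : ∀ x b, (∀ j, 0 ≤ x j) → (∀ k, 0 ≤ b k) →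
      mstar x b ∈ Mset x b ∧ (∑ p : J × K, v p * mstar x b p) = Fval v x b)
    (hlip : ∀ x b x' b', (∀ j, 0 ≤ x j) → (∀ k, 0 ≤ b k) →
      (∀ j, 0 ≤ x' j) → (∀ k, 0 ≤ b' k) →
      ∀ p : J × K, |mstar x b p - mstar x' b' p| ≤
        C * max (⨆ j, |x j - x' j|) (⨆ k, |b k - b' k|)) :
    ∀ (ε : ℝ), 0 < ε →
      ∀ (x : J → ℝ) (b : K → ℝ) (A : J → ℝ) (B : K → ℝ),
        (∀ j, 0 ≤ x j) → (∀ k, 0 ≤ b k) → (∀ j, 0 ≤ A j) → (∀ k, 0 ≤ B k) →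
        (∀ j, x j - ε ≤ A j) → (∀ k, b k - ε ≤ B k) →
        Fval v x b - ((Fintype.card J + Fintype.card K) * (Fintype.card J) *
            (Fintype.card K) * C * (⨆ p : J × K, v p)) * ε ≤ Fval v A B := by
  intro ε hε x b A B hx hb hA hB hxA hbB
  classical
  obtain ⟨p0⟩ := (inferInstance : Nonempty (J × K))
  -- C is nonnegative
  have hC : 0 ≤ C := by
    have h := hlip (fun _ => 0) (fun _ => 0) (fun _ => 1) (fun _ => 0)
      (fun _ => le_refl 0) (fun _ => le_refl 0) (fun _ => zero_le_one)
      (fun _ => le_refl 0) p0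
    simp only [sub_self, abs_zero, ciSup_const, zero_sub, abs_neg, abs_one] at h
    have : max (1:ℝ) 0 = 1 := max_eq_left zero_le_one
    rw [this, mul_one] at h
    exact le_trans (abs_nonneg _) h
  set vbar : ℝ := ⨆ p : J × K, v p with hvbar
  have hvle : ∀ p, v p ≤ vbar := fun p => le_ciSup (Finite.bddAbove_range v) p
  have hvbar0 : 0 ≤ vbar := le_trans (hv p0) (hvle p0)
  -- truncated capacities
  set x' : J → ℝ := fun j => min (x j) (A j) with hx'def
  set b' : K → ℝ := fun k => min (b k) (B k) with hb'def
  have hx' : ∀ j, 0 ≤ x' j := fun j => le_min (hx j) (hA j)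
  have hb' : ∀ k, 0 ≤ b' k := fun k => le_min (hb k) (hB k)
  set m1 := mstar x b with hm1
  set m2 := mstar x' b' with hm2
  obtain ⟨hm1mem, hm1val⟩ := hopt x b hx hb
  obtain ⟨hm2mem, _⟩ := hopt x' b' hx' hb'
  -- m2 is feasible for (A, B)
  have hm2AB : m2 ∈ Mset A B := by
    refine ⟨hm2mem.1, fun j => ?_, fun k => ?_⟩
    · exact le_trans (hm2mem.2.1 j) (min_le_right _ _)
    · exact le_trans (hm2mem.2.2 k) (min_le_right _ _)
  -- the objective set for (A,B) is bounded above
  have hbdd : BddAbove ((fun m : J × K → ℝ => ∑ p : J × K, v p * m p) '' Mset A B) := by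
    refine ⟨∑ p : J × K, v p * A p.1, ?_⟩
    rintro y ⟨m, hm, rfl⟩
    apply Finset.sum_le_sum
    intro p _
    refine mul_le_mul_of_nonneg_left ?_ (hv p)
    calc m p = m (p.1, p.2) := by rw [Prod.mk.eta]
      _ ≤ ∑ k, m (p.1, k) :=
          Finset.single_le_sum (fun k _ => hm.1 _) (Finset.mem_univ p.2)
      _ ≤ A p.1 := hm.2.1 p.1
  have hFAB : ∑ p : J × K, v p * m2 p ≤ Fval v A B :=
    le_csSup hbdd ⟨m2, hm2AB, rfl⟩
  -- distance between (x,b) and (x',b') is at most ε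
  have hmax : max (⨆ j, |x j - x' j|) (⨆ k, |b k - b' k|) ≤ ε := by
    apply max_le
    · apply ciSup_le
      intro j
      have h1 : x' j ≤ x j := min_le_left _ _
      rw [abs_of_nonneg (by linarith)]
      have : x j - ε ≤ x' j := le_min (by linarith) (hxA j)
      linarith
    · apply ciSup_le
      intro k
      have h1 : b' k ≤ b k := min_le_left _ _
      rw [abs_of_nonneg (by linarith)]
      have : b k - ε ≤ b' k := le_min (by linarith) (hbB k)
      linarith
  have key : ∀ p : J × K, |m1 p - m2 p| ≤ C * ε := fun p =>
    le_trans (hlip x b x' b' hx hb hx' hb' p) (mul_le_mul_of_nonneg_left hmax hC)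
  -- bound the gap in objective values
  set cJ : ℝ := (Fintype.card J : ℝ) with hcJ
  set cK : ℝ := (Fintype.card K : ℝ) with hcK
  have hcJ1 : (1:ℝ) ≤ cJ := by
    rw [hcJ]; exact_mod_cast Fintype.card_pos
  have hcK1 : (1:ℝ) ≤ cK := by
    rw [hcK]; exact_mod_cast Fintype.card_pos
  have hgap : Fval v x b - ∑ p : J × K, v p * m2 p ≤ cJ * cK * vbar * (C * ε) := by
    rw [← hm1val, ← Finset.sum_sub_distrib]
    calc ∑ p : J × K, (v p * m1 p - v p * m2 p)
        = ∑ p : J × K, v p * (m1 p - m2 p) := by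
          apply Finset.sum_congr rfl; intro p _; ring
      _ ≤ ∑ p : J × K, v p * (C * ε) := by
          apply Finset.sum_le_sum
          intro p _
          exact mul_le_mul_of_nonneg_left
            (le_trans (le_abs_self _) (key p)) (hv p)
      _ = (∑ p : J × K, v p) * (C * ε) := by rw [← Finset.sum_mul]
      _ ≤ (cJ * cK * vbar) * (C * ε) := by
          apply mul_le_mul_of_nonneg_right _ (mul_nonneg hC hε.le)
          calc ∑ p : J × K, v p ≤ ∑ _p : J × K, vbar :=
                Finset.sum_le_sum fun p _ => hvle p
            _ = (Fintype.card (J × K) : ℝ) * vbar := by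
                rw [Finset.sum_const, nsmul_eq_mul, Finset.card_univ]
            _ = cJ * cK * vbar := by
                rw [Fintype.card_prod, hcJ, hcK]; push_cast; ring
  -- final arithmetic
  have hX : 0 ≤ cJ * cK * C * vbar * ε := by
    have : (0:ℝ) ≤ cJ := by linarith
    have : (0:ℝ) ≤ cK := by linarith
    positivity
  have hfac : cJ * cK * vbar * (C * ε) ≤ (cJ + cK) * cJ * cK * C * vbar * ε := by
    nlinarith [hX, hcJ1, hcK1]
  linarith [hFAB, hgap, hfac]
end
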